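/- Let F be a field of characteristic not equal to 2. The Lie subalgebra of M₄(F) (with bracket [X,Y] = XY − YX) generated by the four matrices X_{1,1} = E₁₄+E₂₃, X_{−1,−1} = E₃₂+E₄₁, X_{1,−1} = E₁₂−E₄₃, X_{−1,1} = E₂₁−E₃₄ is exactly sp₄(F) = {X ∈ M₄(F) : XᵀJ + JX = 0}. -/

import Mathlib

open Matrix

attribute [local instance 100] LieRing.ofAssociativeRing

/-- The 4×4 matrix `J` given in 2×2 blocks by `[[0, I₂], [−I₂, 0]]`. -/
def Jmat (R : Type*) [CommRing R] : Matrix (Fin 4) (Fin 4) R :=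
  !![0, 0, 1, 0; 0, 0, 0, 1; -1, 0, 0, 0; 0, -1, 0, 0]

/-- `X_{1,1} = E₁₄ + E₂₃`. -/
def X11 (R : Type*) [CommRing R] : Matrix (Fin 4) (Fin 4) R :=
  !![0, 0, 0, 1; 0, 0, 1, 0; 0, 0, 0, 0; 0, 0, 0, 0]

/-- `X_{−1,−1} = E₃₂ + E₄₁`. -/
def Xm1m1 (R : Type*) [CommRing R] : Matrix (Fin 4) (Fin 4) R :=
  !![0, 0, 0, 0; 0, 0, 0, 0; 0, 1, 0, 0; 1, 0, 0, 0]

/-- `X_{1,−1} = E₁₂ − E₄₃`. -/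
def X1m1 (R : Type*) [CommRing R] : Matrix (Fin 4) (Fin 4) R :=
  !![0, 1, 0, 0; 0, 0, 0, 0; 0, 0, 0, 0; 0, 0, -1, 0]

/-- `X_{−1,1} = E₂₁ − E₃₄`. -/
def Xm11 (R : Type*) [CommRing R] : Matrix (Fin 4) (Fin 4) R :=
  !![0, 0, 0, 0; 1, 0, 0, 0; 0, 0, 0, -1; 0, 0, 0, 0]

/-!
The four generators are skew-adjoint for `J`, so their Lie span lies in `sp₄`. Conversely, their
brackets are twice the long root vectors `E₁₃, E₂₄, E₃₁, E₄₂` and `H₁ ± H₂`, so once `2` is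
invertible the Lie span contains a ten-element spanning set of `sp₄`: the condition `XᵀJ + JX = 0`
determines the six entries `X₃₃, X₄₄, X₃₄, X₄₃, X₂₃, X₄₁` from the other ten.
-/

theorem coe_skewAdjointMatricesLieSubalgebra {n R : Type*} [Fintype n] [DecidableEq n]
    [CommRing R] (J : Matrix n n R) :
    (skewAdjointMatricesLieSubalgebra J : Set (Matrix n n R)) = {X | Xᵀ * J + J * X = 0} := by
  ext X
  simp [Matrix.IsSkewAdjoint, IsAdjointPair, add_eq_zero_iff_eq_neg]

section

variable (R : Type*) [CommRing R]

abbrev sp4 : LieSubalgebra R (Matrix (Fin 4) (Fin 4) R) :=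
  skewAdjointMatricesLieSubalgebra (Jmat R)

-- `X_{a,b}` is the root vector of the root `aε₁ + bε₂`; `H₁ = E₁₁ − E₃₃` and `H₂ = E₂₂ − E₄₄`.
def X20 : Matrix (Fin 4) (Fin 4) R := !![0, 0, 1, 0; 0, 0, 0, 0; 0, 0, 0, 0; 0, 0, 0, 0]

def X02 : Matrix (Fin 4) (Fin 4) R := !![0, 0, 0, 0; 0, 0, 0, 1; 0, 0, 0, 0; 0, 0, 0, 0]

def Xm20 : Matrix (Fin 4) (Fin 4) R := !![0, 0, 0, 0; 0, 0, 0, 0; 1, 0, 0, 0; 0, 0, 0, 0]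

def X0m2 : Matrix (Fin 4) (Fin 4) R := !![0, 0, 0, 0; 0, 0, 0, 0; 0, 0, 0, 0; 0, 1, 0, 0]

def H1 : Matrix (Fin 4) (Fin 4) R := !![1, 0, 0, 0; 0, 0, 0, 0; 0, 0, -1, 0; 0, 0, 0, 0]

def H2 : Matrix (Fin 4) (Fin 4) R := !![0, 0, 0, 0; 0, 1, 0, 0; 0, 0, 0, 0; 0, 0, 0, -1]

theorem lie_X1m1_X11 : ⁅X1m1 R, X11 R⁆ = (2 : R) • X20 R := by
  ext i j
  fin_cases i <;> fin_cases j <;> simp [Ring.lie_def, X1m1, X11, X20, one_add_one_eq_two]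

theorem lie_Xm11_X11 : ⁅Xm11 R, X11 R⁆ = (2 : R) • X02 R := by
  ext i j
  fin_cases i <;> fin_cases j <;> simp [Ring.lie_def, Xm11, X11, X02, one_add_one_eq_two]

theorem lie_Xm1m1_Xm11 : ⁅Xm1m1 R, Xm11 R⁆ = (2 : R) • Xm20 R := by
  ext i j
  fin_cases i <;> fin_cases j <;> simp [Ring.lie_def, Xm1m1, Xm11, Xm20, one_add_one_eq_two]

theorem lie_Xm1m1_X1m1 : ⁅Xm1m1 R, X1m1 R⁆ = (2 : R) • X0m2 R := by
  ext i j
  fin_cases i <;> fin_cases j <;> simp [Ring.lie_def, Xm1m1, X1m1, X0m2, one_add_one_eq_two]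

theorem lie_X11_Xm1m1 : ⁅X11 R, Xm1m1 R⁆ = H1 R + H2 R := by
  ext i j
  fin_cases i <;> fin_cases j <;> simp [Ring.lie_def, X11, Xm1m1, H1, H2]

theorem lie_X1m1_Xm11 : ⁅X1m1 R, Xm11 R⁆ = H1 R - H2 R := by
  ext i j
  fin_cases i <;> fin_cases j <;> simp [Ring.lie_def, X1m1, Xm11, H1, H2]

theorem rootVectors_subset_sp4 : {X11 R, Xm1m1 R, X1m1 R, Xm11 R} ⊆ (sp4 R : Set _) := by
  rw [coe_skewAdjointMatricesLieSubalgebra]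
  rintro X (rfl | rfl | rfl | rfl) <;> ext i j <;> fin_cases i <;> fin_cases j <;>
    simp [X11, Xm1m1, X1m1, Xm11, Jmat, mul_apply, Fin.sum_univ_four]

theorem eq_sum_of_mem_sp4 {X : Matrix (Fin 4) (Fin 4) R} (hX : X ∈ sp4 R) :
    X = X 0 0 • H1 R + X 1 1 • H2 R + X 0 1 • X1m1 R + X 1 0 • Xm11 R + X 0 3 • X11 R
      + X 2 1 • Xm1m1 R + X 0 2 • X20 R + X 1 3 • X02 R + X 2 0 • Xm20 R + X 3 1 • X0m2 R := by
  rw [← SetLike.mem_coe, coe_skewAdjointMatricesLieSubalgebra] at hX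
  have entry (i j : Fin 4) : (Xᵀ * Jmat R + Jmat R * X) i j = 0 := congrFun₂ hX i j
  have h22 : X 2 2 = -X 0 0 := by
    simpa [Jmat, mul_apply, vecMul, dotProduct, Fin.sum_univ_four, add_eq_zero_iff_eq_neg']
      using entry 0 2
  have h23 : X 2 3 = -X 1 0 := by
    simpa [Jmat, mul_apply, vecMul, dotProduct, Fin.sum_univ_four, add_eq_zero_iff_eq_neg']
      using entry 0 3
  have h32 : X 3 2 = -X 0 1 := by
    simpa [Jmat, mul_apply, vecMul, dotProduct, Fin.sum_univ_four, add_eq_zero_iff_eq_neg']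
      using entry 1 2
  have h33 : X 3 3 = -X 1 1 := by
    simpa [Jmat, mul_apply, vecMul, dotProduct, Fin.sum_univ_four, add_eq_zero_iff_eq_neg']
      using entry 1 3
  have h30 : X 3 0 = X 2 1 := Eq.symm <| by
    simpa [Jmat, mul_apply, vecMul, dotProduct, Fin.sum_univ_four, add_eq_zero_iff_eq_neg']
      using entry 0 1
  have h12 : X 1 2 = X 0 3 := Eq.symm <| by
    simpa [Jmat, mul_apply, vecMul, dotProduct, Fin.sum_univ_four, add_eq_zero_iff_eq_neg']
      using entry 2 3
  ext i j
  fin_cases i <;> fin_cases j <;>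
    simp [H1, H2, X11, Xm1m1, X1m1, Xm11, X20, X02, Xm20, X0m2, h22, h23, h32, h33, h30, h12]

theorem sp4_le_of_rootVectors_subset (h2 : IsUnit (2 : R))
    {L : LieSubalgebra R (Matrix (Fin 4) (Fin 4) R)}
    (hL : {X11 R, Xm1m1 R, X1m1 R, Xm11 R} ⊆ (L : Set _)) : sp4 R ≤ L := by
  simp only [Set.insert_subset_iff, Set.singleton_subset_iff, SetLike.mem_coe] at hL
  obtain ⟨h11, hm1m1, h1m1, hm11⟩ := hL
  have half_mem {Y : Matrix (Fin 4) (Fin 4) R} (hY : (2 : R) • Y ∈ L) : Y ∈ L :=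
    (L.toSubmodule.smul_mem_iff_of_isUnit h2).1 hY
  have h20 : X20 R ∈ L := half_mem (lie_X1m1_X11 R ▸ L.lie_mem h1m1 h11)
  have h02 : X02 R ∈ L := half_mem (lie_Xm11_X11 R ▸ L.lie_mem hm11 h11)
  have hm20 : Xm20 R ∈ L := half_mem (lie_Xm1m1_Xm11 R ▸ L.lie_mem hm1m1 hm11)
  have h0m2 : X0m2 R ∈ L := half_mem (lie_Xm1m1_X1m1 R ▸ L.lie_mem hm1m1 h1m1)
  have hsum : H1 R + H2 R ∈ L := lie_X11_Xm1m1 R ▸ L.lie_mem h11 hm1m1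
  have hdiff : H1 R - H2 R ∈ L := lie_X1m1_Xm11 R ▸ L.lie_mem h1m1 hm11
  have hH1 : H1 R ∈ L := half_mem <| by
    rw [two_smul]; convert L.add_mem hsum hdiff using 1; abel
  have hH2 : H2 R ∈ L := half_mem <| by
    rw [two_smul]; convert L.sub_mem hsum hdiff using 1; abel
  intro X hX
  rw [eq_sum_of_mem_sp4 R hX]
  repeat' apply L.add_mem
  all_goals exact L.smul_mem _ ‹_›

end

/-- Over a field of characteristic `≠ 2`, the Lie subalgebra of `M₄(F)` generated by
`X_{1,1}, X_{−1,−1}, X_{1,−1}, X_{−1,1}` is exactly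
`sp₄(F) = {X ∈ M₄(F) : XᵀJ + JX = 0}`. -/
theorem lie_span_root_vectors_eq_sp4 (F : Type*) [Field F] (h2 : (2 : F) ≠ 0) :
    (LieSubalgebra.lieSpan F (Matrix (Fin 4) (Fin 4) F)
        {X11 F, Xm1m1 F, X1m1 F, Xm11 F} : Set (Matrix (Fin 4) (Fin 4) F))
      = {X | Xᵀ * Jmat F + Jmat F * X = 0} := by
  rw [← coe_skewAdjointMatricesLieSubalgebra]
  congr 1
  exact le_antisymm (LieSubalgebra.lieSpan_le.2 (rootVectors_subset_sp4 F))
    (sp4_le_of_rootVectors_subset F h2.isUnit LieSubalgebra.subset_lieSpan)
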